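/- Let $k$ be a field of characteristic $p > 3$ and $r \ge 1$, $n = 2r$. Define $\theta_r : W_r = \mathrm{Der}(B_r) \to B_n$ by $\theta_r(\sum_{i=1}^r f_i \partial_i) = \sum_{i=1}^r x_i f_i(x_{r+1},\ldots,x_{2r})$, where $f_i(x_{r+1},\ldots,x_{2r})$ means substituting $x_{r+j}$ for $x_j$ in $f_i$. Then the composition $\beta = D_H \circ \theta_r : W_r \to \mathrm{Der}(B_n)$ is an injective homomorphism of Lie algebras. -/

import Mathlib

open MvPolynomial

set_option synthInstance.maxHeartbeats 1000000
set_option maxHeartbeats 1000000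

noncomputable section

variable (k : Type) [Field k] (p n : ℕ)

/-- The ideal `⟨x₁^p, …, xₙ^p⟩` of the polynomial ring. -/
def truncIdeal : Ideal (MvPolynomial (Fin n) k) :=
  Ideal.span (Set.range fun i : Fin n => (X i : MvPolynomial (Fin n) k) ^ p)

/-- The truncated polynomial ring `Bₙ = k[x₁,…,xₙ]/⟨xᵢ^p⟩`. -/
abbrev TruncPoly := MvPolynomial (Fin n) k ⧸ truncIdeal k p n

/-- The canonical projection `k[x]→ Bₙ`, as a `k`-algebra homomorphism. -/
def Bmk : MvPolynomial (Fin n) k →ₐ[k] TruncPoly k p n :=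
  Ideal.Quotient.mkₐ k (truncIdeal k p n)

theorem Bmk_surjective : Function.Surjective (Bmk k p n) :=
  Ideal.Quotient.mkₐ_surjective k _

/-- The class of the variable `xᵢ` in `Bₙ`. -/
def mkX (i : Fin n) : TruncPoly k p n := Bmk k p n (X i)

theorem pderiv_mem [CharP k p] (i : Fin n) {f : MvPolynomial (Fin n) k}
    (hf : f ∈ truncIdeal k p n) : pderiv i f ∈ truncIdeal k p n := by
  induction hf using Submodule.span_induction with
  | mem x hx =>
      obtain ⟨j, rfl⟩ := hx
      have h0 : (pderiv i) ((X j : MvPolynomial (Fin n) k) ^ p) = 0 := by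
        rw [(pderiv i).leibniz_pow]
        have : (p : MvPolynomial (Fin n) k) = 0 := CharP.cast_eq_zero _ p
        rw [nsmul_eq_mul, this, zero_mul]
      rw [h0]; exact Ideal.zero_mem _
  | zero => simpa using Ideal.zero_mem _
  | add x y hx hy ihx ihy => simpa [map_add] using Ideal.add_mem _ ihx ihy
  | smul c x hx ih =>
      rw [smul_eq_mul, (pderiv i).leibniz]
      exact Ideal.add_mem _ (Submodule.smul_mem _ _ ih)
        (by rw [smul_eq_mul, mul_comm]; exact Ideal.mul_mem_left _ _ hx)

/-- The partial derivative `∂ᵢ`, descended to the truncated polynomial ring. -/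
def pd [CharP k p] (i : Fin n) : TruncPoly k p n → TruncPoly k p n :=
  fun f => Quotient.liftOn' f (fun g => Bmk k p n (pderiv i g)) (by
    intro a b hab
    have h : a - b ∈ truncIdeal k p n := by
      rwa [Submodule.quotientRel_def] at hab
    have h2 := pderiv_mem k p n i h
    rw [map_sub] at h2
    have : Bmk k p n (pderiv i a) - Bmk k p n (pderiv i b) = 0 := by
      rw [← map_sub]
      exact (Ideal.Quotient.eq_zero_iff_mem).mpr h2
    exact sub_eq_zero.mp this)

@[simp] theorem pd_mk [CharP k p] (i : Fin n) (g : MvPolynomial (Fin n) k) :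
    pd k p n i (Bmk k p n g) = Bmk k p n (pderiv i g) := rfl

/-- `∂ᵢ` as a `k`-derivation of `Bₙ`. -/
def pdD [CharP k p] (i : Fin n) :
    Derivation k (TruncPoly k p n) (TruncPoly k p n) where
  toFun := pd k p n i
  map_add' := by
    intro a b
    obtain ⟨x, rfl⟩ := Bmk_surjective k p n a
    obtain ⟨y, rfl⟩ := Bmk_surjective k p n b
    show Bmk k p n (pderiv i (x + y)) = Bmk k p n (pderiv i x) + Bmk k p n (pderiv i y)
    rw [map_add, map_add]
  map_smul' := by
    intro c a
    obtain ⟨x, rfl⟩ := Bmk_surjective k p n a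
    show Bmk k p n (pderiv i (c • x)) = c • Bmk k p n (pderiv i x)
    rw [(pderiv i).map_smul, map_smul]
  map_one_eq_zero' := by
    show Bmk k p n (pderiv i 1) = 0
    simp
  leibniz' := by
    intro a b
    obtain ⟨x, rfl⟩ := Bmk_surjective k p n a
    obtain ⟨y, rfl⟩ := Bmk_surjective k p n b
    show Bmk k p n (pderiv i (x * y)) =
      Bmk k p n x * Bmk k p n (pderiv i y) + Bmk k p n y * Bmk k p n (pderiv i x)
    rw [(pderiv i).leibniz]
    simp only [smul_eq_mul, map_add, map_mul]

@[simp] theorem pdD_apply [CharP k p] (i : Fin n) (f : TruncPoly k p n) :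
    pdD k p n i f = pd k p n i f := rfl

/-- The maximal ideal `𝔪 = (x₁,…,xₙ)` of `Bₙ`. -/
def mIdeal : Ideal (TruncPoly k p n) := Ideal.span (Set.range (mkX k p n))

/-- Evaluation at the origin `κ : Bₙ → k`. -/
def kappa (hp : 0 < p) : TruncPoly k p n →ₐ[k] k :=
  Ideal.Quotient.liftₐ (truncIdeal k p n) (aeval (0 : Fin n → k)) (by
    intro a ha
    have h : truncIdeal k p n ≤ RingHom.ker
        (aeval (0 : Fin n → k) : MvPolynomial (Fin n) k →ₐ[k] k).toRingHom := by
      rw [truncIdeal, Ideal.span_le]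
      rintro _ ⟨j, rfl⟩
      simp [RingHom.mem_ker, zero_pow hp.ne']
    exact h ha)

variable (r : ℕ)

/-- For `i < r`, the index of `xᵢ` among the `2r` variables. -/
def idx1 (i : Fin r) : Fin (2 * r) := ⟨i, by omega⟩

/-- For `i < r`, the index of `x_{i+r}` among the `2r` variables. -/
def idx2 (i : Fin r) : Fin (2 * r) := ⟨i + r, by omega⟩

/-- The Hamiltonian derivation `D_H(f) = ∑ᵢ (∂ᵢ(f)∂_{i+r} - ∂_{i+r}(f)∂ᵢ)`. -/
def DH [CharP k p] (f : TruncPoly k p (2 * r)) :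
    Derivation k (TruncPoly k p (2 * r)) (TruncPoly k p (2 * r)) :=
  ∑ i : Fin r,
    (pd k p (2 * r) (idx1 r i) f • pdD k p (2 * r) (idx2 r i)
      - pd k p (2 * r) (idx2 r i) f • pdD k p (2 * r) (idx1 r i))

/-- The Poisson bracket `[f,g] = D_H(f)(g)` on `B_{2r}`. -/
def pbr [CharP k p] (f g : TruncPoly k p (2 * r)) : TruncPoly k p (2 * r) :=
  DH k p r f g

/-- The image `Hₙ' = D_H(Bₙ)` of the Hamiltonian map, as a `k`-subspace of
derivations (it equals the span of the range of the linear map `D_H`). -/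
def HnP [CharP k p] :
    Submodule k (Derivation k (TruncPoly k p (2 * r)) (TruncPoly k p (2 * r))) :=
  Submodule.span k (Set.range (DH k p r))

/-- The substitution `x_j ↦ x_{r+j}`, as a map `B_r → B_{2r}`. -/
def shiftHom : TruncPoly k p r →ₐ[k] TruncPoly k p (2 * r) :=
  Ideal.Quotient.liftₐ (truncIdeal k p r)
    ((Bmk k p (2 * r)).comp (rename (idx2 r))) (by
      intro a ha
      have h : truncIdeal k p r ≤ RingHom.ker
          (((Bmk k p (2 * r)).comp (rename (idx2 r))).toRingHom) := by
        rw [truncIdeal, Ideal.span_le]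
        rintro _ ⟨j, rfl⟩
        have : ((Bmk k p (2 * r)).comp (rename (idx2 r))) ((X j : MvPolynomial (Fin r) k) ^ p)
            = Bmk k p (2 * r) ((X (idx2 r j) : MvPolynomial (Fin (2 * r)) k) ^ p) := by
          simp [map_pow]
        simp only [SetLike.mem_coe, RingHom.mem_ker, AlgHom.toRingHom_eq_coe,
          RingHom.coe_coe]
        rw [this]
        exact Ideal.Quotient.eq_zero_iff_mem.mpr (Ideal.subset_span ⟨idx2 r j, rfl⟩)
      exact h ha)

/-- `θ_r : W_r → B_{2r}`, `∑ fᵢ ∂ᵢ ↦ ∑ xᵢ fᵢ(x_{r+1},…,x_{2r})`. -/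
def theta [CharP k p]
    (D : Derivation k (TruncPoly k p r) (TruncPoly k p r)) : TruncPoly k p (2 * r) :=
  ∑ i : Fin r, mkX k p (2 * r) (idx1 r i) * shiftHom k p r (D (mkX k p r i))

/-- `β = D_H ∘ θ_r : W_r → Der(B_{2r})`. -/
def betaMap [CharP k p]
    (D : Derivation k (TruncPoly k p r) (TruncPoly k p r)) :
    Derivation k (TruncPoly k p (2 * r)) (TruncPoly k p (2 * r)) :=
  DH k p r (theta k p r D)

end

/-! Write `s : B_r → B_{2r}` for the shift `x_j ↦ x_{r+j}`, so that `θ D = ∑ xᵢ · s (D xᵢ)`.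
As `θ D` is linear in `x₁, …, x_r`, the derivation `β D` acts on the shifted copy of `B_r` as `D`
does: `β D (s g) = s (D g)`. Since `s` has a left inverse (`x_j ↦ x_{j mod r}`), `β` is injective.
The Jacobi identity for the Poisson bracket `{f, g} = D_H f g` reads
`[D_H f, D_H g] = D_H {f, g}`, so `β` is a Lie homomorphism once `β D (θ E) = θ [D, E]`; this
follows from the Leibniz rule, `β D (s g) = s (D g)` and `β D xⱼ = -∂_{r+j} (θ D)`. -/

theorem Derivation.finset_sum_apply {R A M ι : Type*} [CommSemiring R] [CommSemiring A]
    [Algebra R A] [AddCommMonoid M] [Module R M] [Module A M] (s : Finset ι)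
    (D : ι → Derivation R A M) (a : A) : (∑ i ∈ s, D i) a = ∑ i ∈ s, D i a := by
  rw [← Derivation.coeFnAddMonoidHom_apply, map_sum, Finset.sum_apply]
  rfl

theorem MvPolynomial.pderiv_comm {σ R : Type*} [CommSemiring R] (a b : σ)
    (f : MvPolynomial σ R) : pderiv a (pderiv b f) = pderiv b (pderiv a f) := by
  classical
  induction f using MvPolynomial.induction_on with
  | C c => simp
  | add f g hf hg => simp [map_add, hf, hg]
  | mul_X q i ih =>
      simp only [pderiv_mul, pderiv_X, map_add, ih, Pi.single_apply]
      rcases eq_or_ne i a with rfl | ha <;> rcases eq_or_ne i b with rfl | hb <;>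
        simp_all

section PartialDerivatives

variable {k : Type} [Field k] {p n : ℕ}

theorem mkX_pow_eq_zero (i : Fin n) : mkX k p n i ^ p = 0 := by
  rw [mkX, ← map_pow]
  exact Ideal.Quotient.eq_zero_iff_mem.mpr (Ideal.subset_span ⟨i, rfl⟩)

theorem adjoin_range_mkX : Algebra.adjoin k (Set.range (mkX k p n)) = ⊤ := by
  rw [show Set.range (mkX k p n) = Bmk k p n '' Set.range X by rw [← Set.range_comp]; rfl,
    ← AlgHom.map_adjoin, adjoin_range_X, Algebra.map_top,
    (AlgHom.range_eq_top _).mpr (Bmk_surjective k p n)]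

theorem derivation_ext_mkX {D E : Derivation k (TruncPoly k p n) (TruncPoly k p n)}
    (h : ∀ i, D (mkX k p n i) = E (mkX k p n i)) : D = E :=
  Derivation.ext_of_adjoin_eq_top _ adjoin_range_mkX fun _ ⟨i, hi⟩ => hi ▸ h i

variable [CharP k p]

theorem pd_add (a : Fin n) (f g : TruncPoly k p n) :
    pd k p n a (f + g) = pd k p n a f + pd k p n a g :=
  (pdD k p n a).map_add f g

theorem pd_sub (a : Fin n) (f g : TruncPoly k p n) :
    pd k p n a (f - g) = pd k p n a f - pd k p n a g :=
  (pdD k p n a).map_sub f g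

theorem pd_smul (a : Fin n) (c : k) (f : TruncPoly k p n) :
    pd k p n a (c • f) = c • pd k p n a f :=
  (pdD k p n a).map_smul c f

theorem pd_sum (a : Fin n) {ι : Type*} (s : Finset ι) (f : ι → TruncPoly k p n) :
    pd k p n a (∑ i ∈ s, f i) = ∑ i ∈ s, pd k p n a (f i) :=
  map_sum (pdD k p n a) f s

theorem pd_mul (a : Fin n) (f g : TruncPoly k p n) :
    pd k p n a (f * g) = pd k p n a f * g + f * pd k p n a g := by
  rw [← pdD_apply, Derivation.leibniz, smul_eq_mul, smul_eq_mul, add_comm, mul_comm g]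
  rfl

theorem pd_comm (a b : Fin n) (f : TruncPoly k p n) :
    pd k p n a (pd k p n b f) = pd k p n b (pd k p n a f) := by
  obtain ⟨q, rfl⟩ := Bmk_surjective k p n f
  simp only [pd_mk, pderiv_comm]

theorem pd_mkX (a b : Fin n) : pd k p n a (mkX k p n b) = if a = b then 1 else 0 := by
  rw [mkX, pd_mk, pderiv_X]
  split_ifs with h
  · subst h; simp
  · simp [Pi.single_eq_of_ne' h]

theorem derivation_apply_eq_sum (D : Derivation k (TruncPoly k p n) (TruncPoly k p n))
    (g : TruncPoly k p n) : D g = ∑ i, D (mkX k p n i) * pd k p n i g := by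
  have hD : D = ∑ i, D (mkX k p n i) • pdD k p n i := derivation_ext_mkX fun j => by
    simp [Derivation.finset_sum_apply, pd_mkX]
  conv_lhs => rw [hD]
  simp [Derivation.finset_sum_apply]

end PartialDerivatives

section Hamiltonian

variable {r : ℕ}

theorem idx1_injective : Function.Injective (idx1 r) := fun _ _ h =>
  Fin.ext (Fin.mk.inj_iff.mp h)

theorem idx2_injective : Function.Injective (idx2 r) := fun _ _ h =>
  Fin.ext (Nat.add_right_cancel (Fin.mk.inj_iff.mp h))

theorem idx1_ne_idx2 (i j : Fin r) : idx1 r i ≠ idx2 r j := fun h => by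
  have := Fin.mk.inj_iff.mp h
  omega

theorem exists_eq_idx1_or_idx2 (a : Fin (2 * r)) :
    (∃ j, a = idx1 r j) ∨ ∃ j, a = idx2 r j := by
  rcases lt_or_ge (a : ℕ) r with ha | ha
  · exact .inl ⟨⟨a, ha⟩, rfl⟩
  · exact .inr ⟨⟨a - r, by omega⟩, Fin.ext (by simp [idx2]; omega)⟩

variable {k : Type} [Field k] {p : ℕ} [CharP k p]

theorem DH_apply (f g : TruncPoly k p (2 * r)) :
    DH k p r f g = ∑ i, (pd k p (2 * r) (idx1 r i) f * pd k p (2 * r) (idx2 r i) g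
      - pd k p (2 * r) (idx2 r i) f * pd k p (2 * r) (idx1 r i) g) := by
  simp [DH, Derivation.finset_sum_apply]

theorem DH_mkX_idx1 (f : TruncPoly k p (2 * r)) (j : Fin r) :
    DH k p r f (mkX k p (2 * r) (idx1 r j)) = -pd k p (2 * r) (idx2 r j) f := by
  simp [DH_apply, pd_mkX, (idx1_ne_idx2 _ _).symm, idx1_injective.eq_iff]

theorem DH_mkX_idx2 (f : TruncPoly k p (2 * r)) (j : Fin r) :
    DH k p r f (mkX k p (2 * r) (idx2 r j)) = pd k p (2 * r) (idx1 r j) f := by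
  simp [DH_apply, pd_mkX, idx1_ne_idx2, idx2_injective.eq_iff]

theorem DH_add (f g : TruncPoly k p (2 * r)) : DH k p r (f + g) = DH k p r f + DH k p r g := by
  rw [DH, DH, DH, ← Finset.sum_add_distrib]
  refine Finset.sum_congr rfl fun i _ => ?_
  rw [pd_add, pd_add, add_smul, add_smul]
  abel

theorem DH_smul (c : k) (f : TruncPoly k p (2 * r)) : DH k p r (c • f) = c • DH k p r f := by
  ext g
  simp only [Derivation.smul_apply, DH_apply, pd_smul, Finset.smul_sum, smul_sub, smul_mul_assoc]

theorem DH_apply_swap (f g : TruncPoly k p (2 * r)) : DH k p r f g = -DH k p r g f := by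
  rw [DH_apply, DH_apply, ← Finset.sum_neg_distrib]
  refine Finset.sum_congr rfl fun i _ => ?_
  ring

theorem pd_DH_apply (c : Fin (2 * r)) (f g : TruncPoly k p (2 * r)) :
    pd k p (2 * r) c (DH k p r f g)
      = DH k p r (pd k p (2 * r) c f) g + DH k p r f (pd k p (2 * r) c g) := by
  simp only [DH_apply, pd_sum, pd_sub, pd_mul, ← Finset.sum_add_distrib]
  refine Finset.sum_congr rfl fun i _ => ?_
  rw [pd_comm c (idx1 r i) f, pd_comm c (idx2 r i) f, pd_comm c (idx1 r i) g,
    pd_comm c (idx2 r i) g]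
  ring

/-- The Jacobi identity of the Poisson bracket `{f, g} = D_H f g`. -/
theorem DH_commutator (f g : TruncPoly k p (2 * r)) :
    ⁅DH k p r f, DH k p r g⁆ = DH k p r (DH k p r f g) := by
  refine derivation_ext_mkX fun a => ?_
  rw [Derivation.commutator_apply]
  rcases exists_eq_idx1_or_idx2 a with ⟨j, rfl⟩ | ⟨j, rfl⟩
  · rw [DH_mkX_idx1, DH_mkX_idx1, DH_mkX_idx1, pd_DH_apply, map_neg, map_neg,
      DH_apply_swap g]
    ring
  · rw [DH_mkX_idx2, DH_mkX_idx2, DH_mkX_idx2, pd_DH_apply, DH_apply_swap g]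
    ring

end Hamiltonian

section Shift

variable {k : Type} [Field k] {p r : ℕ}

theorem shiftHom_mk (q : MvPolynomial (Fin r) k) :
    shiftHom k p r (Bmk k p r q) = Bmk k p (2 * r) (rename (idx2 r) q) := rfl

theorem truncIdeal_le_ker_rename {m n : ℕ} (φ : Fin m → Fin n) :
    truncIdeal k p m ≤ RingHom.ker ((Bmk k p n).comp (rename φ)) := by
  rw [truncIdeal, Ideal.span_le]
  rintro _ ⟨j, rfl⟩
  exact RingHom.mem_ker.mpr (by simpa [mkX] using mkX_pow_eq_zero (k := k) (p := p) (φ j))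

noncomputable def foldHom : TruncPoly k p (2 * r) →ₐ[k] TruncPoly k p r :=
  Ideal.Quotient.liftₐ _ _ fun _ ha => truncIdeal_le_ker_rename Fin.modNat ha

theorem foldHom_mk (q : MvPolynomial (Fin (2 * r)) k) :
    foldHom (Bmk k p (2 * r) q) = Bmk k p r (rename Fin.modNat q) := rfl

theorem foldHom_shiftHom (g : TruncPoly k p r) : foldHom (shiftHom k p r g) = g := by
  obtain ⟨q, rfl⟩ := Bmk_surjective k p r g
  have hfold : Fin.modNat ∘ idx2 r = id :=
    funext fun i => Fin.ext (by simp [idx2, Fin.modNat, Nat.mod_eq_of_lt i.isLt])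
  rw [shiftHom_mk, foldHom_mk, rename_rename, hfold, rename_id_apply]

theorem shiftHom_injective : Function.Injective (shiftHom k p r) :=
  Function.LeftInverse.injective foldHom_shiftHom

variable [CharP k p]

theorem pd_idx1_shiftHom (i : Fin r) (g : TruncPoly k p r) :
    pd k p (2 * r) (idx1 r i) (shiftHom k p r g) = 0 := by
  obtain ⟨q, rfl⟩ := Bmk_surjective k p r g
  rw [shiftHom_mk, pd_mk, pderiv_eq_zero_of_notMem_vars, map_zero]
  intro h
  obtain ⟨j, -, hj⟩ := mem_vars_rename _ _ h
  exact idx1_ne_idx2 i j hj.symm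

theorem pd_idx2_shiftHom (i : Fin r) (g : TruncPoly k p r) :
    pd k p (2 * r) (idx2 r i) (shiftHom k p r g) = shiftHom k p r (pd k p r i g) := by
  obtain ⟨q, rfl⟩ := Bmk_surjective k p r g
  rw [shiftHom_mk, pd_mk, pd_mk, shiftHom_mk, pderiv_rename idx2_injective]

end Shift

section Beta

variable {k : Type} [Field k] {p r : ℕ} [CharP k p]

local notation "Der" n => Derivation k (TruncPoly k p n) (TruncPoly k p n)

theorem theta_add (D E : Der r) : theta k p r (D + E) = theta k p r D + theta k p r E := by
  simp only [theta, Derivation.add_apply, map_add, mul_add, Finset.sum_add_distrib]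

theorem theta_smul (c : k) (D : Der r) : theta k p r (c • D) = c • theta k p r D := by
  simp only [theta, Derivation.smul_apply, map_smul, mul_smul_comm, Finset.smul_sum]

theorem pd_idx1_theta (D : Der r) (j : Fin r) :
    pd k p (2 * r) (idx1 r j) (theta k p r D) = shiftHom k p r (D (mkX k p r j)) := by
  simp [theta, pd_sum, pd_mul, pd_idx1_shiftHom, pd_mkX, idx1_injective.eq_iff]

theorem pd_idx2_theta (D : Der r) (j : Fin r) :
    pd k p (2 * r) (idx2 r j) (theta k p r D)
      = ∑ i, mkX k p (2 * r) (idx1 r i) * shiftHom k p r (pd k p r j (D (mkX k p r i))) := by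
  simp [theta, pd_sum, pd_mul, pd_idx2_shiftHom, pd_mkX, (idx1_ne_idx2 _ _).symm]

theorem betaMap_shiftHom (D : Der r) (g : TruncPoly k p r) :
    betaMap k p r D (shiftHom k p r g) = shiftHom k p r (D g) := by
  simp only [betaMap, DH_apply, pd_idx1_shiftHom, pd_idx2_shiftHom, pd_idx1_theta, mul_zero,
    sub_zero, ← map_mul, ← map_sum, ← derivation_apply_eq_sum]

theorem betaMap_mkX_idx1 (D : Der r) (j : Fin r) :
    betaMap k p r D (mkX k p (2 * r) (idx1 r j))
      = -∑ i, mkX k p (2 * r) (idx1 r i) * shiftHom k p r (pd k p r j (D (mkX k p r i))) := by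
  rw [betaMap, DH_mkX_idx1, pd_idx2_theta]

theorem betaMap_mkX_idx2 (D : Der r) (j : Fin r) :
    betaMap k p r D (mkX k p (2 * r) (idx2 r j)) = shiftHom k p r (D (mkX k p r j)) := by
  rw [betaMap, DH_mkX_idx2, pd_idx1_theta]

theorem betaMap_injective : Function.Injective (betaMap k p r) := fun D E h =>
  derivation_ext_mkX fun j => shiftHom_injective <| by
    rw [← betaMap_mkX_idx2, ← betaMap_mkX_idx2, h]

theorem sum_shiftHom_mul_betaMap_mkX_idx1 (D E : Der r) :
    ∑ j, shiftHom k p r (E (mkX k p r j)) * betaMap k p r D (mkX k p (2 * r) (idx1 r j))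
      = -∑ i, mkX k p (2 * r) (idx1 r i) * shiftHom k p r (E (D (mkX k p r i))) := by
  -- `mul_neg` does not rewrite as stated: the negation found on `TruncPoly` is that of
  -- `Submodule.Quotient`, which is not reducibly the one of the ring structure.
  have hmul_neg : ∀ a b : TruncPoly k p (2 * r), a * -b = -(a * b) := fun a b => mul_neg a b
  simp only [betaMap_mkX_idx1, hmul_neg, Finset.mul_sum, Finset.sum_neg_distrib]
  rw [Finset.sum_comm]
  congr 1
  refine Finset.sum_congr rfl fun i _ => ?_
  rw [derivation_apply_eq_sum E, map_sum, Finset.mul_sum]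
  refine Finset.sum_congr rfl fun j _ => ?_
  rw [map_mul]
  ring

theorem betaMap_theta (D E : Der r) : betaMap k p r D (theta k p r E) = theta k p r ⁅D, E⁆ := by
  have hleibniz : betaMap k p r D (theta k p r E) = ∑ j, mkX k p (2 * r) (idx1 r j)
        * shiftHom k p r (D (E (mkX k p r j)))
      + ∑ j, shiftHom k p r (E (mkX k p r j)) * betaMap k p r D (mkX k p (2 * r) (idx1 r j)) := by
    simp only [theta, map_sum, Derivation.leibniz, smul_eq_mul, betaMap_shiftHom,
      Finset.sum_add_distrib]
  rw [hleibniz, sum_shiftHom_mul_betaMap_mkX_idx1, ← sub_eq_add_neg, ← Finset.sum_sub_distrib]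
  simp only [theta, Derivation.commutator_apply, map_sub, mul_sub]

end Beta

theorem stmt13_general (k : Type) [Field k] (p r : ℕ) [CharP k p] :
    Function.Injective (betaMap k p r) ∧
    (∀ D E : Derivation k (TruncPoly k p r) (TruncPoly k p r),
      betaMap k p r (D + E) = betaMap k p r D + betaMap k p r E) ∧
    (∀ (c : k) (D : Derivation k (TruncPoly k p r) (TruncPoly k p r)),
      betaMap k p r (c • D) = c • betaMap k p r D) ∧
    (∀ D E : Derivation k (TruncPoly k p r) (TruncPoly k p r),
      betaMap k p r ⁅D, E⁆ = ⁅betaMap k p r D, betaMap k p r E⁆) := by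
  refine ⟨betaMap_injective, fun D E => ?_, fun c D => ?_, fun D E => ?_⟩
  · simp only [betaMap, theta_add, DH_add]
  · simp only [betaMap, theta_smul, DH_smul]
  · rw [betaMap, ← betaMap_theta, betaMap, betaMap, DH_commutator]

/-- STATEMENT 13: `β = D_H ∘ θ_r : W_r → Der(B_{2r})` is an injective homomorphism
of Lie algebras. -/
theorem stmt13 (k : Type) [Field k] (p r : ℕ) [CharP k p] (hp : 3 < p) (hr : 1 ≤ r) :
    Function.Injective (betaMap k p r) ∧
    (∀ D E : Derivation k (TruncPoly k p r) (TruncPoly k p r),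
      betaMap k p r (D + E) = betaMap k p r D + betaMap k p r E) ∧
    (∀ (c : k) (D : Derivation k (TruncPoly k p r) (TruncPoly k p r)),
      betaMap k p r (c • D) = c • betaMap k p r D) ∧
    (∀ D E : Derivation k (TruncPoly k p r) (TruncPoly k p r),
      betaMap k p r ⁅D, E⁆ = ⁅betaMap k p r D, betaMap k p r E⁆) :=
  stmt13_general k p r
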